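/- Let p ∈ (1,∞). The function y ↦ y^{−1}·K(y)^{−1/2} is integrable on the interval (0,1), i.e. ∫₀¹ dy / (y·√(K(y))) < ∞. -/
import Mathlib


open Set Real Filter MeasureTheory

/-- `F_a(y,w)` from the paper (with parameter `p`). -/
noncomputable def Fa (p a y w : ℝ) : ℝ :=
  (8*p*(1/a + 2*y) + (2*p/a + 4*(3*p - 2)*y + 2*(p - 1)*y*w)*w) / (y^2 * (4 + (p - 1)*w))

/-- `G` is the family `a ↦ G_a` of solutions of `G_a' = -F_a(y, G_a)` on `(0,1)`
with `G_a(1) = 0`: each `G_a` is continuous on `(0,1]`, positive on `(0,1)` and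
strictly decreasing on `(0,1]`. -/
def IsGFamily (p : ℝ) (G : ℝ → ℝ → ℝ) : Prop :=
  ∀ a : ℝ, 0 < a →
    ContinuousOn (G a) (Set.Ioc 0 1) ∧
    G a 1 = 0 ∧
    (∀ y ∈ Set.Ioo (0:ℝ) 1, HasDerivAt (G a) (-(Fa p a y (G a y))) y) ∧
    (∀ y ∈ Set.Ioo (0:ℝ) 1, 0 < G a y) ∧
    StrictAntiOn (G a) (Set.Ioc 0 1)

private lemma key1 (p q y w : ℝ) (hp : 1 < p) (hq : 0 < q) (hy : 0 < y) (hw : 0 ≤ w) :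
    1 * (y ^ 2 * (4 + (p - 1) * w)) ≤
    (8 * p * (q + 2 * y) + (2 * p * q + 4 * (3 * p - 2) * y + 2 * (p - 1) * y * w) * w) * y := by
  nlinarith [mul_nonneg (mul_nonneg (show (0:ℝ) ≤ 8*p by linarith) hy.le) hq.le,
    mul_nonneg (show (0:ℝ) ≤ 16*p-4 by linarith) (sq_nonneg y),
    mul_nonneg (mul_nonneg (mul_nonneg (show (0:ℝ) ≤ 2*p by linarith) hw) hy.le) hq.le,
    mul_nonneg (mul_nonneg (show (0:ℝ) ≤ 11*p-7 by linarith) hw) (sq_nonneg y),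
    mul_nonneg (mul_nonneg (show (0:ℝ) ≤ 2*(p-1) by linarith) (mul_nonneg hw hw)) (sq_nonneg y)]

private lemma key2 (p q y w : ℝ) (hp : 1 < p) (hq : 0 < q) (hy : 0 < y) (hw : 0 ≤ w) :
    w * (y ^ 2 * (4 + (p - 1) * w)) ≤
    (8 * p * (q + 2 * y) + (2 * p * q + 4 * (3 * p - 2) * y + 2 * (p - 1) * y * w) * w) * y := by
  nlinarith [mul_nonneg (mul_nonneg (show (0:ℝ) ≤ 8*p by linarith) hy.le) hq.le,
    mul_nonneg (show (0:ℝ) ≤ 16*p by linarith) (sq_nonneg y),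
    mul_nonneg (mul_nonneg (mul_nonneg (show (0:ℝ) ≤ 2*p by linarith) hw) hy.le) hq.le,
    mul_nonneg (mul_nonneg (show (0:ℝ) ≤ 12*p-12 by linarith) hw) (sq_nonneg y),
    mul_nonneg (mul_nonneg (show (0:ℝ) ≤ (p-1) by linarith) (mul_nonneg hw hw)) (sq_nonneg y)]

private lemma Fa_ge1 (p a y w : ℝ) (hp : 1 < p) (ha : 0 < a) (hy : 0 < y) (hw : 0 ≤ w) :
    1/y ≤ Fa p a y w := by
  have hpw : 0 ≤ (p-1) * w := mul_nonneg (by linarith) hw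
  have hD : 0 < y^2 * (4 + (p - 1)*w) := by positivity
  rw [Fa, div_le_div_iff₀ hy hD,
    show (8*p*(1/a + 2*y) + (2*p/a + 4*(3*p - 2)*y + 2*(p - 1)*y*w)*w)
      = (8*p*(1/a + 2*y) + (2*p*(1/a) + 4*(3*p - 2)*y + 2*(p - 1)*y*w)*w) from by ring]
  exact key1 p (1/a) y w hp (by positivity) hy hw

private lemma Fa_ge2 (p a y w : ℝ) (hp : 1 < p) (ha : 0 < a) (hy : 0 < y) (hw : 0 ≤ w) :
    w/y ≤ Fa p a y w := by
  have hpw : 0 ≤ (p-1) * w := mul_nonneg (by linarith) hw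
  have hD : 0 < y^2 * (4 + (p - 1)*w) := by positivity
  rw [Fa, div_le_div_iff₀ hy hD,
    show (8*p*(1/a + 2*y) + (2*p/a + 4*(3*p - 2)*y + 2*(p - 1)*y*w)*w)
      = (8*p*(1/a + 2*y) + (2*p*(1/a) + 4*(3*p - 2)*y + 2*(p - 1)*y*w)*w) from by ring]
  exact key2 p (1/a) y w hp (by positivity) hy hw

theorem K_inv_sqrt_integrable (p : ℝ) (hp : 1 < p) (G : ℝ → ℝ → ℝ) (K : ℝ → ℝ)
    (hG : IsGFamily p G)
    (hK : ∀ y ∈ Set.Ioc (0:ℝ) 1,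
      Filter.Tendsto (fun a => G a y) Filter.atTop (nhds (K y))) :
    MeasureTheory.IntegrableOn (fun y => (y * Real.sqrt (K y))⁻¹) (Set.Ioo 0 1) := by
  set y₀ : ℝ := Real.exp (-1) with hy₀def
  have hy₀pos : 0 < y₀ := Real.exp_pos _
  have hy₀lt1 : y₀ < 1 := Real.exp_lt_one_iff.2 (by norm_num)
  have hlogy₀ : Real.log y₀ = -1 := Real.log_exp _
  -- lower bound G a y ≥ -log y
  have hGlog : ∀ a : ℝ, 0 < a → ∀ y ∈ Ioc (0:ℝ) 1, -Real.log y ≤ G a y := by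
    intro a ha y hy
    obtain ⟨hc, h1, hd, hpos, _⟩ := hG a ha
    have hGnn : ∀ z ∈ Ioo (0:ℝ) 1, 0 ≤ G a z := fun z hz => (hpos z hz).le
    have hder : ∀ z ∈ Ioo (0:ℝ) 1,
        HasDerivAt (fun y => G a y + Real.log y) (-(Fa p a z (G a z)) + z⁻¹) z := by
      intro z hz
      exact (hd z hz).add (Real.hasDerivAt_log (ne_of_gt hz.1))
    have hanti : AntitoneOn (fun y => G a y + Real.log y) (Ioc 0 1) := by
      apply antitoneOn_of_deriv_nonpos (convex_Ioc 0 1)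
      · exact hc.add (Real.continuousOn_log.mono fun z hz => ne_of_gt hz.1)
      · rw [interior_Ioc]
        exact fun z hz => ((hder z hz).differentiableAt).differentiableWithinAt
      · rw [interior_Ioc]
        intro z hz
        rw [(hder z hz).deriv]
        have := Fa_ge1 p a z (G a z) hp ha hz.1 (hGnn z hz)
        rw [one_div] at this
        linarith
    have h1' : (fun y => G a y + Real.log y) 1 ≤ (fun y => G a y + Real.log y) y :=
      hanti hy (by constructor <;> norm_num) hy.2
    simp only [h1, Real.log_one] at h1'
    linarith
  -- lower bound y * G a y ≥ y₀ for y ≤ y₀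
  have hGc : ∀ a : ℝ, 0 < a → ∀ y ∈ Ioc (0:ℝ) y₀, y₀ ≤ y * G a y := by
    intro a ha y hy
    obtain ⟨hc, h1, hd, hpos, _⟩ := hG a ha
    have hsub : Ioc (0:ℝ) y₀ ⊆ Ioc 0 1 := Ioc_subset_Ioc_right hy₀lt1.le
    have hder : ∀ z ∈ Ioo (0:ℝ) y₀,
        HasDerivAt (fun y => y * G a y) (1 * G a z + z * (-(Fa p a z (G a z)))) z := by
      intro z hz
      have hz1 : z ∈ Ioo (0:ℝ) 1 := ⟨hz.1, hz.2.trans hy₀lt1⟩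
      exact (hasDerivAt_id z).mul (hd z hz1)
    have hanti : AntitoneOn (fun y => y * G a y) (Ioc 0 y₀) := by
      apply antitoneOn_of_deriv_nonpos (convex_Ioc 0 y₀)
      · exact continuousOn_id.mul (hc.mono hsub)
      · rw [interior_Ioc]
        exact fun z hz => ((hder z hz).differentiableAt).differentiableWithinAt
      · rw [interior_Ioc]
        intro z hz
        rw [(hder z hz).deriv]
        have hz1 : z ∈ Ioo (0:ℝ) 1 := ⟨hz.1, hz.2.trans hy₀lt1⟩
        have h2 := Fa_ge2 p a z (G a z) hp ha hz.1 (hpos z hz1).le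
        rw [div_le_iff₀ hz.1] at h2
        nlinarith
    have hstep : (fun y => y * G a y) y₀ ≤ (fun y => y * G a y) y :=
      hanti hy ⟨hy₀pos, le_refl _⟩ hy.2
    have hGy₀ : 1 ≤ G a y₀ := by
      have := hGlog a ha y₀ ⟨hy₀pos, hy₀lt1.le⟩
      rw [hlogy₀] at this; linarith
    calc y₀ = y₀ * 1 := (mul_one _).symm
      _ ≤ y₀ * G a y₀ := by nlinarith
      _ ≤ y * G a y := hstep
  -- limits
  have hKlog : ∀ y ∈ Ioc (0:ℝ) 1, -Real.log y ≤ K y := by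
    intro y hy
    refine ge_of_tendsto (hK y hy) ?_
    filter_upwards [eventually_ge_atTop (1:ℝ)] with a ha
    exact hGlog a (lt_of_lt_of_le one_pos ha) y hy
  have hKc : ∀ y ∈ Ioc (0:ℝ) y₀, y₀ ≤ y * K y := by
    intro y hy
    have hy1 : y ∈ Ioc (0:ℝ) 1 := Ioc_subset_Ioc_right hy₀lt1.le hy
    refine ge_of_tendsto ((hK y hy1).const_mul y) ?_
    filter_upwards [eventually_ge_atTop (1:ℝ)] with a ha
    exact hGc a (lt_of_lt_of_le one_pos ha) y hy
  -- measurability of K on Ioo 0 1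
  have hmeasK : AEMeasurable K (volume.restrict (Ioo (0:ℝ) 1)) := by
    apply aemeasurable_of_tendsto_metrizable_ae' (f := fun (n : ℕ) y => G ((n:ℝ)+1) y)
    · intro n
      have hpos : (0:ℝ) < (n:ℝ)+1 := by positivity
      exact (((hG _ hpos).1.mono Ioo_subset_Ioc_self).aemeasurable measurableSet_Ioo)
    · rw [ae_restrict_iff' measurableSet_Ioo]
      refine ae_of_all _ fun y hy => ?_
      have hcast : Tendsto (fun n : ℕ => ((n:ℝ)+1)) atTop atTop :=
        tendsto_atTop_add_const_right _ 1 tendsto_natCast_atTop_atTop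
      exact (hK y ⟨hy.1, hy.2.le⟩).comp hcast
  -- dominating function
  set g : ℝ → ℝ :=
    fun y => (Real.sqrt y₀)⁻¹ * (Real.sqrt y)⁻¹ + y₀⁻¹ * (Real.sqrt (1-y))⁻¹ with hgdef
  have hint1 : IntegrableOn (fun y : ℝ => (Real.sqrt y)⁻¹) (Ioo 0 1) := by
    have h := intervalIntegral.intervalIntegrable_rpow'
      (a := 0) (b := 1) (r := -(1/2)) (by norm_num)
    have h' : IntegrableOn (fun x : ℝ => x ^ (-(1/2) : ℝ)) (Ioc 0 1) :=
      (intervalIntegrable_iff_integrableOn_Ioc_of_le (by norm_num)).mp h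
    refine ((h'.mono_set Ioo_subset_Ioc_self).congr_fun ?_ measurableSet_Ioo)
    intro y hy
    show y ^ (-(1/2):ℝ) = (Real.sqrt y)⁻¹
    rw [Real.sqrt_eq_rpow, ← Real.rpow_neg hy.1.le]
  have hint2 : IntegrableOn (fun y : ℝ => (Real.sqrt (1-y))⁻¹) (Ioo 0 1) := by
    have h := (intervalIntegral.intervalIntegrable_rpow'
      (a := 0) (b := 1) (r := -(1/2)) (by norm_num)).comp_sub_left 1
    simp only [sub_zero, sub_self] at h
    have h' : IntegrableOn (fun x : ℝ => (1-x) ^ (-(1/2) : ℝ)) (Ioc 0 1) :=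
      (intervalIntegrable_iff_integrableOn_Ioc_of_le (by norm_num)).mp h.symm
    refine ((h'.mono_set Ioo_subset_Ioc_self).congr_fun ?_ measurableSet_Ioo)
    intro y hy
    show (1-y) ^ (-(1/2):ℝ) = (Real.sqrt (1-y))⁻¹
    rw [Real.sqrt_eq_rpow, ← Real.rpow_neg (by linarith [hy.2] : (0:ℝ) ≤ 1 - y)]
  have hintg : IntegrableOn g (Ioo 0 1) := by
    exact (hint1.const_mul _).add (hint2.const_mul _)
  -- pointwise bound
  have hbound : ∀ y ∈ Ioo (0:ℝ) 1, ‖(y * Real.sqrt (K y))⁻¹‖ ≤ g y := by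
    intro y hy
    have hyy : y ∈ Ioc (0:ℝ) 1 := ⟨hy.1, hy.2.le⟩
    have hKpos : 0 < K y := by
      have hlog : Real.log y < 0 := Real.log_neg hy.1 hy.2
      linarith [hKlog y hyy]
    have hfnn : (0:ℝ) ≤ (y * Real.sqrt (K y))⁻¹ := inv_nonneg.2 (mul_nonneg hy.1.le (Real.sqrt_nonneg _))
    rw [Real.norm_eq_abs, abs_of_nonneg hfnn]
    have hterm2 : (0:ℝ) ≤ y₀⁻¹ * (Real.sqrt (1-y))⁻¹ := by positivity
    have hterm1 : (0:ℝ) ≤ (Real.sqrt y₀)⁻¹ * (Real.sqrt y)⁻¹ := by positivity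
    rcases le_total y y₀ with hcase | hcase
    · -- use y * K y ≥ y₀
      have h1 : y₀ ≤ y * K y := hKc y ⟨hy.1, hcase⟩
      have h2 : Real.sqrt y₀ ≤ Real.sqrt y * Real.sqrt (K y) := by
        rw [← Real.sqrt_mul hy.1.le]
        exact Real.sqrt_le_sqrt h1
      have h3 : Real.sqrt y₀ * Real.sqrt y ≤ y * Real.sqrt (K y) := by
        calc Real.sqrt y₀ * Real.sqrt y ≤ (Real.sqrt y * Real.sqrt (K y)) * Real.sqrt y :=
              mul_le_mul_of_nonneg_right h2 (Real.sqrt_nonneg _)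
          _ = (Real.sqrt y * Real.sqrt y) * Real.sqrt (K y) := by ring
          _ = y * Real.sqrt (K y) := by rw [Real.mul_self_sqrt hy.1.le]
      have hlpos : 0 < Real.sqrt y₀ * Real.sqrt y := mul_pos (Real.sqrt_pos.2 hy₀pos) (Real.sqrt_pos.2 hy.1)
      calc (y * Real.sqrt (K y))⁻¹ ≤ (Real.sqrt y₀ * Real.sqrt y)⁻¹ :=
            inv_anti₀ hlpos h3
        _ = (Real.sqrt y₀)⁻¹ * (Real.sqrt y)⁻¹ := by rw [mul_inv]
        _ ≤ g y := by rw [hgdef]; simp only []; linarith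
    · -- use K y ≥ -log y ≥ 1 - y
      have h1 : 1 - y ≤ K y := by
        have := Real.log_le_sub_one_of_pos hy.1
        linarith [hKlog y hyy]
      have h2 : Real.sqrt (1-y) ≤ Real.sqrt (K y) := Real.sqrt_le_sqrt h1
      have h3 : y₀ * Real.sqrt (1-y) ≤ y * Real.sqrt (K y) :=
        mul_le_mul hcase h2 (Real.sqrt_nonneg _) hy.1.le
      have hlpos : 0 < y₀ * Real.sqrt (1-y) :=
        mul_pos hy₀pos (Real.sqrt_pos.2 (by linarith [hy.2]))
      calc (y * Real.sqrt (K y))⁻¹ ≤ (y₀ * Real.sqrt (1-y))⁻¹ :=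
            inv_anti₀ hlpos h3
        _ = y₀⁻¹ * (Real.sqrt (1-y))⁻¹ := by rw [mul_inv]
        _ ≤ g y := by rw [hgdef]; simp only []; linarith
  -- conclude
  have hmf : AEStronglyMeasurable (fun y => (y * Real.sqrt (K y))⁻¹)
      (volume.restrict (Ioo (0:ℝ) 1)) := by
    exact ((aemeasurable_id.mul (Real.continuous_sqrt.measurable.comp_aemeasurable hmeasK)).inv).aestronglyMeasurable
  refine hintg.mono' hmf ?_
  rw [ae_restrict_iff' measurableSet_Ioo]
  exact ae_of_all _ hbound
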